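/- Let p, q, r, s, t, u be integers with p ≠ 0 and s ≠ 0, and define V(n) = p⌊n√2⌋ + qn + r and W(n) = s⌊n√2⌋ + tn + u for n ≥ 1. Suppose V and W are strictly increasing and V(1) = 1. Then V and W are complementary if and only if (p,q,r,s,t,u) = (1,0,0,1,2,0). -/

import Mathlib

/-- Two sequences (indexed by `n ≥ 1`) are complementary if their value sets are
disjoint and their union is the set of positive integers. -/
def ComplementaryPair (V W : ℕ → ℤ) : Prop :=
  Disjoint {z : ℤ | ∃ n : ℕ, 1 ≤ n ∧ V n = z} {z : ℤ | ∃ n : ℕ, 1 ≤ n ∧ W n = z} ∧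
  {z : ℤ | ∃ n : ℕ, 1 ≤ n ∧ V n = z} ∪ {z : ℤ | ∃ n : ℕ, 1 ≤ n ∧ W n = z} = {z : ℤ | 0 < z}

/-!
For increasing complementary `V` and `W`, the integers `1, …, N` are split between the two
sequences, while a sequence within bounded distance of `n ↦ a n` has about `N / a` terms up to
`N`. So the slopes `a = q + p√2` and `b = t + s√2` satisfy `1/a + 1/b = 1`, i.e. `ab = a + b`.
Since `√2` is irrational this is a pair of integer equations, and since `(a - 1)(b - 1) = 1`
one slope lies in `(1, 2)`; together with `p + q = V 2 - V 1 ≥ 1` and `2p + q = V 3 - V 2 ≥ 1`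
(and likewise for `W`) this leaves only `{a, b} = {√2, 2 + √2}`. With `V 1 = 1` the first few terms fix the intercepts when `a = √2`,
and give the collision `V 3 = W 5 = 8` when `a = 2 + √2`. Conversely, `⌊n√2⌋` and
`⌊n(2 + √2)⌋ = ⌊n√2⌋ + 2n` are complementary by Rayleigh's theorem on Beatty sequences.
-/

open Set
open scoped Finset symmDiff

theorem complementaryPair_iff_image {V W : ℕ → ℤ} : ComplementaryPair V W ↔
    Disjoint (V '' Ici 1) (W '' Ici 1) ∧ V '' Ici 1 ∪ W '' Ici 1 = Ioi 0 :=
  Iff.rfl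

theorem complementaryPair_congr {V V' W W' : ℕ → ℤ} (hV : EqOn V V' (Ici 1))
    (hW : EqOn W W' (Ici 1)) : ComplementaryPair V W ↔ ComplementaryPair V' W' := by
  rw [complementaryPair_iff_image, complementaryPair_iff_image, hV.image_eq, hW.image_eq]

namespace ComplementaryPair

variable {V W : ℕ → ℤ}

theorem symm (h : ComplementaryPair V W) : ComplementaryPair W V :=
  ⟨h.1.symm, union_comm (V '' Ici 1) _ ▸ h.2⟩

theorem pos_left (h : ComplementaryPair V W) {n : ℕ} (hn : 1 ≤ n) : 0 < V n :=
  h.2.subset (Or.inl ⟨n, hn, rfl⟩)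

theorem pos_right (h : ComplementaryPair V W) {n : ℕ} (hn : 1 ≤ n) : 0 < W n :=
  h.symm.pos_left hn

theorem left_ne_right (h : ComplementaryPair V W) {m n : ℕ} (hm : 1 ≤ m) (hn : 1 ≤ n) :
    V m ≠ W n :=
  fun he => disjoint_left.1 h.1 ⟨m, hm, rfl⟩ ⟨n, hn, he.symm⟩

theorem mem_right_iff (h : ComplementaryPair V W) {z : ℤ} (hz : 0 < z) :
    z ∈ W '' Ici 1 ↔ z ∉ V '' Ici 1 := by
  refine ⟨fun hW hV => disjoint_left.1 h.1 hV hW, fun hV => ?_⟩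
  have hz' : z ∈ V '' Ici 1 ∪ W '' Ici 1 := h.2 ▸ hz
  exact hz'.resolve_left hV

theorem right_one_le (h : ComplementaryPair V W) (hV : StrictMonoOn V (Ici 1))
    (hW : StrictMonoOn W (Ici 1)) {k : ℕ} (hk : 1 ≤ k) {z : ℤ} (hlt : V k < z)
    (hgt : z < V (k + 1)) : W 1 ≤ z := by
  have hk' : k + 1 ∈ Ici 1 := by simp
  obtain ⟨m, hm, rfl⟩ := (h.mem_right_iff ((h.pos_left hk).trans hlt)).2 <| by
    rintro ⟨n, hn, rfl⟩
    rcases le_or_gt n k with hnk | hnk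
    · exact (hV.le_iff_le hn hk).2 hnk |>.not_gt hlt
    · exact (hV.le_iff_le hk' hn).2 hnk |>.not_gt hgt
  exact hW.monotoneOn (mem_Ici.2 le_rfl) hm hm

end ComplementaryPair

theorem natCast_le_of_strictMonoOn {V : ℕ → ℤ} (hV : StrictMonoOn V (Ici 1)) (h1 : 1 ≤ V 1)
    {n : ℕ} (hn : 1 ≤ n) : (n : ℤ) ≤ V n := by
  induction n, hn using Nat.le_induction with
  | base => simpa using h1
  | succ n hn ih =>
    have := hV (mem_Ici.2 hn) (mem_Ici.2 (by omega : 1 ≤ n + 1)) (lt_add_one n)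
    push_cast
    omega

theorem card_filter_le_eq_card_filter_mem_image {V : ℕ → ℤ} (hV : StrictMonoOn V (Ici 1))
    (h1 : 1 ≤ V 1) [DecidablePred (· ∈ V '' Ici 1)] (N : ℕ) :
    #{n ∈ Finset.Icc 1 N | V n ≤ N} = #{z ∈ Finset.Icc (1 : ℤ) N | z ∈ V '' Ici 1} := by
  classical
  rw [← Finset.card_image_of_injOn (hV.injOn.mono fun n hn => by simp_all)]
  congr 1
  ext z
  simp only [Finset.mem_image, Finset.mem_filter, Finset.mem_Icc, mem_image, mem_Ici]
  constructor
  · rintro ⟨n, ⟨⟨hn, -⟩, hVn⟩, rfl⟩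
    exact ⟨⟨by have := natCast_le_of_strictMonoOn hV h1 hn; omega, hVn⟩, n, hn, rfl⟩
  · rintro ⟨⟨-, hz⟩, n, hn, rfl⟩
    exact ⟨n, ⟨⟨hn, by have := natCast_le_of_strictMonoOn hV h1 hn; omega⟩, hz⟩, rfl⟩

theorem ComplementaryPair.card_add_card {V W : ℕ → ℤ} (h : ComplementaryPair V W)
    (hV : StrictMonoOn V (Ici 1)) (hW : StrictMonoOn W (Ici 1)) (N : ℕ) :
    #{n ∈ Finset.Icc 1 N | V n ≤ N} + #{n ∈ Finset.Icc 1 N | W n ≤ N} = N := by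
  classical
  rw [card_filter_le_eq_card_filter_mem_image hV (h.pos_left le_rfl),
    card_filter_le_eq_card_filter_mem_image hW (h.pos_right le_rfl),
    Finset.filter_congr (q := (· ∉ V '' Ici 1))
      fun z hz => h.mem_right_iff (by simp at hz; omega),
    Finset.card_filter_add_card_filter_not, Int.card_Icc]
  omega

theorem abs_mul_card_filter_le_sub_le {V : ℕ → ℤ} {a C : ℝ} (ha : 1 ≤ a)
    (hV : ∀ n : ℕ, 1 ≤ n → |(V n : ℝ) - a * n| ≤ C) (N : ℕ) :
    |a * #{n ∈ Finset.Icc 1 N | V n ≤ N} - N| ≤ C + a := by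
  have ha0 : 0 < a := by linarith
  have hC : 0 ≤ C := (abs_nonneg _).trans (hV 1 le_rfl)
  set F := {n ∈ Finset.Icc 1 N | V n ≤ N}
  have hF_sub : F ⊆ Finset.Icc 1 ⌊(N + C) / a⌋₊ := by
    intro n hn
    simp only [F, Finset.mem_filter, Finset.mem_Icc] at hn
    obtain ⟨⟨hn1, -⟩, hVn⟩ := hn
    have hVn' : (V n : ℝ) ≤ N := by exact_mod_cast hVn
    have := (abs_le.1 (hV n hn1)).1
    refine Finset.mem_Icc.2 ⟨hn1, Nat.le_floor ?_⟩
    rw [le_div_iff₀ ha0]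
    linarith
  have hF_sup : Finset.Icc 1 ⌊(N - C) / a⌋₊ ⊆ F := by
    intro n hn
    obtain ⟨hn1, hnm⟩ := Finset.mem_Icc.1 hn
    have han : a * n ≤ N - C := by
      rw [Nat.le_floor_iff' (by omega), le_div_iff₀ ha0] at hnm
      linarith
    have hn1' : (1 : ℝ) ≤ n := by exact_mod_cast hn1
    have hnN : (n : ℝ) ≤ N := by nlinarith
    have := (abs_le.1 (hV n hn1)).2
    simp only [F, Finset.mem_filter, Finset.mem_Icc]
    have hVn : (V n : ℝ) ≤ N := by linarith
    exact ⟨⟨hn1, by exact_mod_cast hnN⟩, by exact_mod_cast hVn⟩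
  have hupper : (#F : ℝ) ≤ (N + C) / a := by
    have := Finset.card_le_card hF_sub
    simp only [Nat.card_Icc, add_tsub_cancel_right] at this
    exact (Nat.cast_le.2 this).trans (Nat.floor_le (by positivity))
  have hlower : (N - C) / a - 1 < #F := by
    have := Finset.card_le_card hF_sup
    simp only [Nat.card_Icc, add_tsub_cancel_right] at this
    exact (Nat.sub_one_lt_floor _).trans_le (Nat.cast_le.2 this)
  rw [le_div_iff₀ ha0] at hupper
  rw [sub_lt_iff_lt_add, div_lt_iff₀ ha0] at hlower
  rw [abs_le]
  constructor <;> linarith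

theorem eq_zero_of_forall_abs_mul_natCast_le {c K : ℝ} (h : ∀ N : ℕ, |c * N| ≤ K) :
    c = 0 := by
  by_contra hc
  obtain ⟨N, hN⟩ := exists_nat_gt (K / |c|)
  have := h N
  rw [abs_mul, Nat.abs_cast, div_lt_iff₀ (abs_pos.2 hc)] at *
  linarith

theorem ComplementaryPair.holderConjugate {V W : ℕ → ℤ} (h : ComplementaryPair V W)
    (hVm : StrictMonoOn V (Ici 1)) (hWm : StrictMonoOn W (Ici 1)) {a b C D : ℝ}
    (ha : 1 ≤ a) (hb : 1 ≤ b) (hV : ∀ n : ℕ, 1 ≤ n → |(V n : ℝ) - a * n| ≤ C)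
    (hW : ∀ n : ℕ, 1 ≤ n → |(W n : ℝ) - b * n| ≤ D) : a.HolderConjugate b := by
  have hab : a * b = a + b := by
    rw [← sub_eq_zero]
    refine eq_zero_of_forall_abs_mul_natCast_le (K := b * (C + a) + a * (D + b)) fun N => ?_
    set x := #{n ∈ Finset.Icc 1 N | V n ≤ N}
    set y := #{n ∈ Finset.Icc 1 N | W n ≤ N}
    have hxy : (x : ℝ) + y = N := by exact_mod_cast h.card_add_card hVm hWm N
    calc |(a * b - (a + b)) * N| = |b * (a * x - N) + a * (b * y - N)| := by
          rw [← hxy]; ring_nf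
      _ ≤ b * |a * x - N| + a * |b * y - N| := by
          refine (abs_add_le _ _).trans ?_
          rw [abs_mul, abs_mul, abs_of_nonneg (by linarith : 0 ≤ a),
            abs_of_nonneg (by linarith : 0 ≤ b)]
      _ ≤ b * (C + a) + a * (D + b) := by
          gcongr
          exacts [abs_mul_card_filter_le_sub_le ha hV N, abs_mul_card_filter_le_sub_le hb hW N]
  have ha1 : 1 < a := lt_of_le_of_ne ha fun h1 => by subst h1; linarith
  rw [Real.holderConjugate_iff_eq_conjExponent ha1, eq_div_iff (by linarith)]
  linarith

theorem abs_intCast_mul_floor_add_sub_le (p q r : ℤ) (α : ℝ) (n : ℕ) :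
    |((p * ⌊(n : ℝ) * α⌋ + q * n + r : ℤ) : ℝ) - (q + p * α) * n| ≤
      |(p : ℝ)| + |(r : ℝ)| := by
  have hfract : |Int.fract ((n : ℝ) * α)| ≤ 1 := by
    rw [Int.abs_fract]; exact (Int.fract_lt_one _).le
  calc |((p * ⌊(n : ℝ) * α⌋ + q * n + r : ℤ) : ℝ) - (q + p * α) * n|
      = |p * -Int.fract ((n : ℝ) * α) + r| := by
        rw [Int.fract]; push_cast; ring_nf
    _ ≤ |(p : ℝ)| * 1 + |(r : ℝ)| := by
        refine (abs_add_le _ _).trans ?_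
        rw [abs_mul, abs_neg]
        gcongr
    _ = |(p : ℝ)| + |(r : ℝ)| := by ring

theorem floor_natCast_mul_sqrt_two (n : ℕ) : ⌊(n : ℝ) * √2⌋ = Nat.sqrt (2 * n ^ 2) := by
  rw [← Real.floor_real_sqrt_eq_nat_sqrt]
  push_cast
  rw [Real.sqrt_mul zero_le_two, Real.sqrt_sq (Nat.cast_nonneg n), mul_comm]

theorem eq_zero_of_intCast_add_mul_sqrt_two_eq_zero {m n : ℤ} (h : (m : ℝ) + n * √2 = 0) :
    m = 0 ∧ n = 0 := by
  have hn : n = 0 := by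
    by_contra hn
    exact ((irrational_sqrt_two.intCast_mul hn).intCast_add m).ne_zero h
  subst hn
  exact ⟨by simpa using h, rfl⟩

theorem sqrt_two_bounds : 7 / 5 < √2 ∧ √2 < 3 / 2 := by
  rw [Real.lt_sqrt (by norm_num), Real.sqrt_lt' (by norm_num)]
  norm_num

theorem one_lt_add_mul_sqrt_two {p q : ℤ} (hp : p ≠ 0) (h1 : 1 ≤ p + q)
    (h2 : 1 ≤ 2 * p + q) : 1 < q + p * √2 := by
  have hsqrt := sqrt_two_bounds
  have h1' : (1 : ℝ) ≤ p + q := by exact_mod_cast h1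
  have h2' : (1 : ℝ) ≤ 2 * p + q := by exact_mod_cast h2
  rcases hp.lt_or_gt with hp | hp
  · have : (p : ℝ) ≤ -1 := by exact_mod_cast Int.le_sub_one_of_lt hp
    nlinarith
  · have : (1 : ℝ) ≤ p := by exact_mod_cast hp
    nlinarith

theorem eq_of_add_mul_sqrt_two_lt_two {p q : ℤ} (hp : p ≠ 0) (h1 : 1 ≤ p + q)
    (h2 : 1 ≤ 2 * p + q) (h : q + p * √2 < 2) :
    p = 1 ∧ q = 0 ∨ p = 2 ∧ q = -1 ∨ p = -1 ∧ q = 3 := by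
  have hlo := one_lt_add_mul_sqrt_two hp h1 h2
  have hsqrt := sqrt_two_bounds
  have h1' : (1 : ℝ) ≤ p + q := by exact_mod_cast h1
  have h2' : (1 : ℝ) ≤ 2 * p + q := by exact_mod_cast h2
  have hp3 : p < 3 := by exact_mod_cast (by nlinarith : (p : ℝ) < 3)
  have hp2 : -2 < p := by exact_mod_cast (by nlinarith : (-2 : ℝ) < p)
  obtain rfl | rfl | rfl : p = -1 ∨ p = 1 ∨ p = 2 := by omega
  all_goals push_cast at hlo h
  · have : 2 < q := by exact_mod_cast (by linarith : (2 : ℝ) < q)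
    have : q < 4 := by exact_mod_cast (by linarith : (q : ℝ) < 4)
    omega
  · have : -1 < q := by exact_mod_cast (by linarith : (-1 : ℝ) < q)
    have : q < 1 := by exact_mod_cast (by linarith : (q : ℝ) < 1)
    omega
  · have : -2 < q := by exact_mod_cast (by linarith : (-2 : ℝ) < q)
    have : q < 0 := by exact_mod_cast (by linarith : (q : ℝ) < 0)
    omega

theorem eq_of_add_mul_sqrt_two_lt_two_of_mul_eq_add {p q s t : ℤ} (hp : p ≠ 0)
    (h1 : 1 ≤ p + q) (h2 : 1 ≤ 2 * p + q) (h : q + p * √2 < 2)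
    (E1 : q * t + 2 * p * s = q + t) (E2 : p * t + q * s = p + s) :
    p = 1 ∧ q = 0 ∧ s = 1 ∧ t = 2 := by
  rcases eq_of_add_mul_sqrt_two_lt_two hp h1 h2 h with
    ⟨rfl, rfl⟩ | ⟨rfl, rfl⟩ | ⟨rfl, rfl⟩ <;> omega

theorem eq_of_holderConjugate_add_mul_sqrt_two {p q s t : ℤ} (hp : p ≠ 0) (hs : s ≠ 0)
    (h1 : 1 ≤ p + q) (h2 : 1 ≤ 2 * p + q) (h3 : 1 ≤ s + t) (h4 : 1 ≤ 2 * s + t)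
    (h : (q + p * √2).HolderConjugate (t + s * √2)) :
    p = 1 ∧ q = 0 ∧ s = 1 ∧ t = 2 ∨ p = 1 ∧ q = 2 ∧ s = 1 ∧ t = 0 := by
  have hmul := h.mul_eq_add
  have hsq : √2 * √2 = 2 := Real.mul_self_sqrt zero_le_two
  obtain ⟨E1, E2⟩ := eq_zero_of_intCast_add_mul_sqrt_two_eq_zero
    (m := q * t + 2 * p * s - q - t) (n := p * t + q * s - p - s) <| by
      push_cast; linear_combination hmul - p * s * hsq
  have hne : q + p * √2 ≠ 2 := fun h2 =>
    hp (eq_zero_of_intCast_add_mul_sqrt_two_eq_zero (m := q - 2) (by push_cast; linarith)).2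
  rcases hne.lt_or_gt with ha | ha
  · exact .inl <| eq_of_add_mul_sqrt_two_lt_two_of_mul_eq_add hp h1 h2 ha
      (by linear_combination E1) (by linear_combination E2)
  · have hb : t + s * √2 < 2 := by nlinarith [h.lt]
    obtain ⟨rfl, rfl, rfl, rfl⟩ := eq_of_add_mul_sqrt_two_lt_two_of_mul_eq_add
      (p := s) (q := t) (s := p) (t := q) hs h3 h4 hb
      (by linear_combination E1) (by linear_combination E2)
    exact .inr ⟨rfl, rfl, rfl, rfl⟩

theorem one_le_add_of_strictMonoOn {p q r : ℤ} {V : ℕ → ℤ}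
    (hV : ∀ n : ℕ, 1 ≤ n → V n = p * ⌊(n : ℝ) * √2⌋ + q * n + r)
    (hVm : StrictMonoOn V (Ici 1)) : 1 ≤ p + q ∧ 1 ≤ 2 * p + q := by
  have h12 := hVm (a := 1) (b := 2) (by simp) (by simp) one_lt_two
  have h23 := hVm (a := 2) (b := 3) (by simp) (by simp) (by norm_num)
  rw [hV 1 le_rfl, hV 2 one_le_two] at h12
  rw [hV 2 one_le_two, hV 3 (by norm_num)] at h23
  simp only [floor_natCast_mul_sqrt_two] at h12 h23
  norm_num at h12 h23
  omega

theorem ComplementaryPair.intercepts_eq_zero_of_slope_sqrt_two {V W : ℕ → ℤ} {r u : ℤ}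
    (h : ComplementaryPair V W) (hVm : StrictMonoOn V (Ici 1)) (hWm : StrictMonoOn W (Ici 1))
    (hV : ∀ n : ℕ, 1 ≤ n → V n = ⌊(n : ℝ) * √2⌋ + r)
    (hW : ∀ n : ℕ, 1 ≤ n → W n = ⌊(n : ℝ) * √2⌋ + 2 * n + u) (hV1 : V 1 = 1) :
    r = 0 ∧ u = 0 := by
  have hV1' := hV 1 le_rfl
  have hV2 := hV 2 one_le_two
  have hV3 := hV 3 (by norm_num)
  have hW1 := hW 1 le_rfl
  simp only [floor_natCast_mul_sqrt_two] at hV1' hV2 hV3 hW1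
  norm_num at hV1' hV2 hV3 hW1
  obtain rfl : r = 0 := by omega
  have hle : W 1 ≤ 3 := h.right_one_le hVm hWm one_le_two (by omega) (by norm_num [hV3])
  have hne1 := h.left_ne_right (m := 1) (n := 1) le_rfl le_rfl
  have hne2 := h.left_ne_right (m := 2) (n := 1) one_le_two le_rfl
  have hpos := h.pos_right (n := 1) le_rfl
  omega

theorem not_complementaryPair_of_slope_two_add_sqrt_two {V W : ℕ → ℤ} {r u : ℤ}
    (hVm : StrictMonoOn V (Ici 1)) (hWm : StrictMonoOn W (Ici 1))
    (hV : ∀ n : ℕ, 1 ≤ n → V n = ⌊(n : ℝ) * √2⌋ + 2 * n + r)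
    (hW : ∀ n : ℕ, 1 ≤ n → W n = ⌊(n : ℝ) * √2⌋ + u) (hV1 : V 1 = 1) :
    ¬ ComplementaryPair V W := by
  intro h
  have hV1' := hV 1 le_rfl
  have hV2 := hV 2 one_le_two
  have hV3 := hV 3 (by norm_num)
  have hW1 := hW 1 le_rfl
  have hW5 := hW 5 (by norm_num)
  simp only [floor_natCast_mul_sqrt_two] at hV1' hV2 hV3 hW1 hW5
  norm_num at hV1' hV2 hV3 hW1 hW5
  obtain rfl : r = -2 := by omega
  have hle : W 1 ≤ 2 := h.right_one_le hVm hWm le_rfl (by omega) (by norm_num [hV2])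
  have hne := h.left_ne_right (m := 1) (n := 1) le_rfl le_rfl
  have hpos := h.pos_right (n := 1) le_rfl
  exact h.left_ne_right (m := 3) (n := 5) (by norm_num) (by norm_num) (by omega)

theorem disjoint_and_sup_eq_of_symmDiff_eq {α : Type*} [GeneralizedBooleanAlgebra α]
    {a b c : α} (h : a ∆ b = c) (ha : a ≤ c) (hb : b ≤ c) :
    Disjoint a b ∧ a ⊔ b = c := by
  have hsup : a ⊔ b = c := le_antisymm (sup_le ha hb) (h ▸ symmDiff_le_sup)
  exact ⟨(symmDiff_eq_sup a b).1 (h.trans hsup.symm), hsup⟩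

theorem complementaryPair_beattySeq {r s : ℝ} (hrs : r.HolderConjugate s)
    (hr : Irrational r) :
    ComplementaryPair (fun n : ℕ => beattySeq r n) (fun n : ℕ => beattySeq s n) := by
  have himage (x : ℝ) : (fun n : ℕ => beattySeq x n) '' Ici 1 = {beattySeq x k | k > 0} := by
    ext z
    constructor
    · rintro ⟨n, hn, rfl⟩
      exact ⟨n, by simp at hn; omega, rfl⟩
    · rintro ⟨k, hk, rfl⟩
      exact ⟨k.toNat, by simp; omega, by simp [hk.le]⟩
  have hpos {x : ℝ} (hx : 1 < x) : {beattySeq x k | k > 0} ⊆ Ioi 0 := by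
    rintro _ ⟨k, hk, rfl⟩
    have hk' : (1 : ℝ) ≤ k := by exact_mod_cast hk
    rw [mem_Ioi, beattySeq, Int.floor_pos]
    nlinarith
  rw [complementaryPair_iff_image, himage, himage]
  exact disjoint_and_sup_eq_of_symmDiff_eq (hr.beattySeq_symmDiff_beattySeq_pos hrs)
    (hpos hrs.lt) (hpos hrs.symm.lt)

theorem holderConjugate_sqrt_two : (√2).HolderConjugate (2 + √2) := by
  have hsqrt := sqrt_two_bounds
  rw [Real.holderConjugate_iff_eq_conjExponent (by linarith), eq_div_iff (by linarith)]
  nlinarith [Real.mul_self_sqrt zero_le_two]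

theorem complementaryPair_floor_sqrt_two :
    ComplementaryPair (fun n : ℕ => ⌊(n : ℝ) * √2⌋) (fun n : ℕ => ⌊(n : ℝ) * √2⌋ + 2 * n) := by
  have hV : (fun n : ℕ => beattySeq √2 n) = fun n : ℕ => ⌊(n : ℝ) * √2⌋ := by
    funext n
    rw [beattySeq, Int.cast_natCast]
  have hW : (fun n : ℕ => beattySeq (2 + √2) n) = fun n : ℕ => ⌊(n : ℝ) * √2⌋ + 2 * n := by
    funext n
    rw [beattySeq, ← Int.floor_add_intCast]
    push_cast
    ring_nf
  exact hV ▸ hW ▸ complementaryPair_beattySeq holderConjugate_sqrt_two irrational_sqrt_two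

theorem complementary_pairs_sqrt_two (p q r s t u : ℤ) (hp : p ≠ 0) (hs : s ≠ 0)
    (V W : ℕ → ℤ)
    (hV : ∀ n : ℕ, 1 ≤ n → V n = p * ⌊(n : ℝ) * Real.sqrt 2⌋ + q * n + r)
    (hW : ∀ n : ℕ, 1 ≤ n → W n = s * ⌊(n : ℝ) * Real.sqrt 2⌋ + t * n + u)
    (hVmono : ∀ m n : ℕ, 1 ≤ m → m < n → V m < V n)
    (hWmono : ∀ m n : ℕ, 1 ≤ m → m < n → W m < W n)
    (hV1 : V 1 = 1) :
    ComplementaryPair V W ↔ (p, q, r, s, t, u) = (1, 0, 0, 1, 2, 0) := by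
  have hVm : StrictMonoOn V (Ici 1) := fun m hm n _ hmn => hVmono m n hm hmn
  have hWm : StrictMonoOn W (Ici 1) := fun m hm n _ hmn => hWmono m n hm hmn
  constructor
  · intro h
    obtain ⟨hpq, h2pq⟩ := one_le_add_of_strictMonoOn hV hVm
    obtain ⟨hst, h2st⟩ := one_le_add_of_strictMonoOn hW hWm
    have hconj := h.holderConjugate hVm hWm (one_lt_add_mul_sqrt_two hp hpq h2pq).le
      (one_lt_add_mul_sqrt_two hs hst h2st).le
      (fun n hn => hV n hn ▸ abs_intCast_mul_floor_add_sub_le p q r √2 n)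
      (fun n hn => hW n hn ▸ abs_intCast_mul_floor_add_sub_le s t u √2 n)
    rcases eq_of_holderConjugate_add_mul_sqrt_two hp hs hpq h2pq hst h2st hconj with
      ⟨rfl, rfl, rfl, rfl⟩ | ⟨rfl, rfl, rfl, rfl⟩
    · obtain ⟨rfl, rfl⟩ := h.intercepts_eq_zero_of_slope_sqrt_two (r := r) (u := u) hVm hWm
        (fun n hn => by simp [hV n hn]) (fun n hn => by simp [hW n hn]) hV1
      rfl
    · exact absurd h <| not_complementaryPair_of_slope_two_add_sqrt_two (r := r) (u := u) hVm hWm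
        (fun n hn => by simp [hV n hn]) (fun n hn => by simp [hW n hn]) hV1
  · intro h
    obtain ⟨rfl, rfl, rfl, rfl, rfl, rfl⟩ := by simpa only [Prod.mk.injEq] using h
    exact (complementaryPair_congr (fun n hn => by simp [hV n hn])
      (fun n hn => by simp [hW n hn])).2 complementaryPair_floor_sqrt_two
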